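/- Let G be an n-vertex totally ordered graph, S a set of s vertices of G with s ≤ n − 2, G' = G − S (inheriting the orders), A the array obtained from the height table of G by deleting the columns indexed by S, A' the height table of G', and let {A_β : β ∈ Z} be a family of arrays indexed by Z = {1,2,3,…} × V(G') (ordered lexicographically by row then vertex) satisfying properties (1)–(3): (1) if δ < β then A_β(δ) = A'(δ); (2) if δ ≥ β and A_β(δ) is not a hole then A_β(δ) = A(δ); (3) if γ is the successor of β in Z, then A_γ is obtained from A_β by swapping A_β(β) with A_β(δ) for some δ in the critical interval of A_β, and if β and δ lie in distinct columns u and v then A_β(δ) = uv. If e is an edge of G', β ∈ Z is the cell with A'(β) = e, and [(i,u),(j,u)] is the critical interval of A_β, then drop(G,S,e) ≤ j − i. -/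

import Mathlib

open scoped Classical

namespace AltitudePaper

variable {V : Type*} [Fintype V]

/-- The list of cells `(i, u)` (row `i`, column `u`), rows `1..N`, in the order
they are filled: by row, then by the vertex (column) order. -/
noncomputable def cellList (ov : LinearOrder V) (N : ℕ) : List (ℕ × V) :=
  letI := ov
  (List.range N).flatMap fun i => ((Finset.univ : Finset V).sort (· ≤ ·)).map fun u => (i + 1, u)

/-- The largest (in the edge order `oe`) edge of `G` incident to `u` not among `used`. -/
noncomputable def pick (G : SimpleGraph V) (oe : LinearOrder (Sym2 V)) (u : V)
    (used : Finset (Sym2 V)) : Option (Sym2 V) :=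
  letI := oe
  ((Finset.univ : Finset (Sym2 V)).filter fun e => e ∈ G.edgeSet ∧ u ∈ e ∧ e ∉ used).max

/-- Fill the given list of cells in order, greedily placing at each cell `(i,u)` the
largest unused edge incident to `u`. -/
noncomputable def tableAux (G : SimpleGraph V) (oe : LinearOrder (Sym2 V)) :
    List (ℕ × V) → Finset (Sym2 V) → (ℕ × V) → Option (Sym2 V)
  | [], _, _ => none
  | c :: rest, used, β =>
    match pick G oe c.2 used with
    | none => if β = c then none else tableAux G oe rest used β
    | some e => if β = c then some e else tableAux G oe rest (insert e used) β

/-- The height table of the totally ordered graph `(G, ov, oe)`:  cells `(i,u)` with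
`i` a positive integer (row) and `u` a vertex (column) are filled in order (by row,
then by column order), each cell receiving the largest edge incident to its column
not appearing in an earlier cell (and left empty if there is none). -/
noncomputable def heightTable (G : SimpleGraph V) (ov : LinearOrder V)
    (oe : LinearOrder (Sym2 V)) : ℕ × V → Option (Sym2 V) :=
  tableAux G oe (cellList ov (Fintype.card (Sym2 V))) ∅

/-- The height `h_G(e)` of an edge `e`: the index of the row of the height table
containing `e`. -/
noncomputable def edgeHeight (G : SimpleGraph V) (ov : LinearOrder V)
    (oe : LinearOrder (Sym2 V)) (e : Sym2 V) : ℕ :=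
  sSup {i | ∃ u, heightTable G ov oe (i, u) = some e}

/-- A monotone path in the edge-ordered graph `(G, oe)`: a path traversing its
edges in increasing order of the edge ordering. -/
def IsMonotonePath (G : SimpleGraph V) (oe : LinearOrder (Sym2 V)) {u v : V}
    (p : G.Walk u v) : Prop :=
  p.IsPath ∧ List.Chain' (fun e f => oe.lt e f) p.edges

/-- The height of a (nontrivial) monotone path: the height of its last edge. -/
noncomputable def pathHeight (G : SimpleGraph V) (ov : LinearOrder V)
    (oe : LinearOrder (Sym2 V)) {u v : V} (p : G.Walk u v) : ℕ :=
  (p.edges.getLast?.map (edgeHeight G ov oe)).getD 0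


/-- The graph `G − S`: delete the vertices of `S` (and all incident edges).  It is
realized on the same vertex type, with the vertices of `S` made isolated; its height
table therefore agrees, on columns outside `S`, with the height table of the induced
graph on `V ∖ S` with the inherited vertex and edge orders. -/
def delVerts (G : SimpleGraph V) (S : Set V) : SimpleGraph V where
  Adj a b := G.Adj a b ∧ a ∉ S ∧ b ∉ S
  symm := ⟨by intro a b h; exact ⟨h.1.symm, h.2.2, h.2.1⟩⟩
  loopless := ⟨by intro a h; exact G.loopless.irrefl a h.1⟩

/-- The contents of a cell of one of the arrays `A_β`: empty, an edge, or a hole. -/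
inductive Cell (V : Type*) where
  | empty : Cell V
  | edge : Sym2 V → Cell V
  | hole : Cell V

/-- View a height-table entry as a cell (no holes). -/
def ofOpt : Option (Sym2 V) → Cell V
  | none => Cell.empty
  | some e => Cell.edge e

/-- The strict order on the index set `Z = {1,2,…} × V(G′)` of cells:
`(i,u) < (i',v)` iff `i < i'`, or `i = i'` and `u` precedes `v` in the vertex
order. -/
def zLT (ov : LinearOrder V) {S : Set V} (a b : ℕ × {u : V // u ∉ S}) : Prop :=
  a.1 < b.1 ∨ (a.1 = b.1 ∧ ov.lt a.2.val b.2.val)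

/-- The (non-strict) order on `Z`. -/
def zLE (ov : LinearOrder V) {S : Set V} (a b : ℕ × {u : V // u ∉ S}) : Prop :=
  zLT ov a b ∨ a = b

/-- `γ` is the successor of `β` in `Z`. -/
def IsSuccZ (ov : LinearOrder V) {S : Set V} (β γ : ℕ × {u : V // u ∉ S}) : Prop :=
  zLT ov β γ ∧ ∀ δ, zLT ov β δ → zLE ov γ δ

/-- `j` is the row index of the top of the critical interval `[(i,u),(j,u)]` of the
array `Af β` at `β = (i,u)`: the least `j ≥ i` such that the cell `(j, u)` does not
contain a hole. -/
def IsCritBound {S : Set V} (Af : (ℕ × {u : V // u ∉ S}) → (ℕ × {u : V // u ∉ S}) → Cell V)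
    (β : ℕ × {u : V // u ∉ S}) (j : ℕ) : Prop :=
  β.1 ≤ j ∧ Af β (j, β.2) ≠ Cell.hole ∧
    ∀ j', β.1 ≤ j' → j' < j → Af β (j', β.2) = Cell.hole

/-- `drop(G, S, e) = h_G(e) − h_{G−S}(e)`. -/
noncomputable def dropHeight (G : SimpleGraph V) (ov : LinearOrder V)
    (oe : LinearOrder (Sym2 V)) (S : Set V) (e : Sym2 V) : ℤ :=
  (edgeHeight G ov oe e : ℤ) - (edgeHeight (delVerts G S) ov oe e : ℤ)

/-!
Let `γ` be the successor of `β = (i, u)`. Since `A'(β) = e`, property (1) puts `e` at `β` in `A_γ`,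
so the swap producing `A_γ` took `e` from a cell `δ` of the critical interval of `A_β`. That cell
holds an edge rather than a hole, so by (2) the height table of `G` has `e` at `δ` as well: hence
`h_G(e)` is the row of `δ`, at most `j`, while `h_{G−S}(e) = i`.
-/

section HeightTable

variable {G : SimpleGraph V} {oe : LinearOrder (Sym2 V)}

theorem pick_notMem {u : V} {used : Finset (Sym2 V)} {e : Sym2 V}
    (h : pick G oe u used = some e) : e ∉ used := by
  let := oe
  exact (Finset.mem_filter.mp (Finset.mem_of_max h)).2.2.2

theorem tableAux_notMem_of_eq_some {l : List (ℕ × V)} {used : Finset (Sym2 V)}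
    {β : ℕ × V} {e : Sym2 V} (h : tableAux G oe l used β = some e) : e ∉ used := by
  induction l generalizing used with
  | nil => simp [tableAux] at h
  | cons c rest ih =>
    rcases hp : pick G oe c.2 used with _ | f <;> simp only [tableAux, hp] at h <;>
      split_ifs at h
    · exact ih h
    · cases h; exact pick_notMem hp
    · exact fun hmem => ih h (Finset.mem_insert_of_mem hmem)

theorem tableAux_injective_of_eq_some {l : List (ℕ × V)} {used : Finset (Sym2 V)}
    {β β' : ℕ × V} {e : Sym2 V} (h : tableAux G oe l used β = some e)
    (h' : tableAux G oe l used β' = some e) : β = β' := by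
  induction l generalizing used with
  | nil => simp [tableAux] at h
  | cons c rest ih =>
    rcases hp : pick G oe c.2 used with _ | f <;> simp only [tableAux, hp] at h h' <;>
      split_ifs at h h' with hβ hβ'
    · exact ih h h'
    · exact hβ.trans hβ'.symm
    · cases h; exact absurd (Finset.mem_insert_self _ _) (tableAux_notMem_of_eq_some h')
    · cases h'; exact absurd (Finset.mem_insert_self _ _) (tableAux_notMem_of_eq_some h)
    · exact ih h h'

theorem edgeHeight_eq_of_heightTable_eq_some {ov : LinearOrder V} {e : Sym2 V} {i : ℕ} {u : V}
    (h : heightTable G ov oe (i, u) = some e) : edgeHeight G ov oe e = i := by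
  have hrows : {k | ∃ w, heightTable G ov oe (k, w) = some e} = {i} := by
    ext k
    refine ⟨fun ⟨w, hw⟩ => ?_, fun hk => ⟨u, hk ▸ h⟩⟩
    exact congrArg Prod.fst (tableAux_injective_of_eq_some hw h)
  rw [edgeHeight, hrows, csSup_singleton]

end HeightTable

section Cells

omit [Fintype V]

theorem ofOpt_eq_edge_iff {o : Option (Sym2 V)} {e : Sym2 V} :
    ofOpt o = Cell.edge e ↔ o = some e := by
  cases o <;> simp [ofOpt]

variable {S : Set V}

theorem zLT_iff_toLex_lt [ov : LinearOrder V] {a b : ℕ × {u : V // u ∉ S}} :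
    zLT ov a b ↔ toLex a < toLex b := by
  simp only [zLT, Prod.Lex.toLex_lt_toLex, Subtype.coe_lt_coe]

theorem zLE_iff_toLex_le [ov : LinearOrder V] {a b : ℕ × {u : V // u ∉ S}} :
    zLE ov a b ↔ toLex a ≤ toLex b := by
  rw [zLE, zLT_iff_toLex_lt, le_iff_lt_or_eq, toLex_inj]

theorem zLE.fst_le {ov : LinearOrder V} {a b : ℕ × {u : V // u ∉ S}} (h : zLE ov a b) :
    a.1 ≤ b.1 := by
  let := ov
  exact (Prod.Lex.toLex_le_toLex'.mp (zLE_iff_toLex_le.mp h)).1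

theorem exists_isSuccZ [Finite V] (ov : LinearOrder V) (β : ℕ × {u : V // u ∉ S}) :
    ∃ γ, IsSuccZ ov β γ := by
  let := ov
  obtain ⟨γ, hβγ, hmin⟩ := wellFounded_lt.has_min {δ : ℕ ×ₗ {u : V // u ∉ S} | toLex β < δ}
    ⟨toLex (β.1 + 1, β.2), Prod.Lex.toLex_lt_toLex.mpr (Or.inl β.1.lt_succ_self)⟩
  refine ⟨ofLex γ, zLT_iff_toLex_lt.mpr hβγ, fun δ hδ => zLE_iff_toLex_le.mpr ?_⟩
  exact not_lt.mp (hmin (toLex δ) (zLT_iff_toLex_lt.mp hδ))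

theorem IsCritBound.unique
    {Af : (ℕ × {u : V // u ∉ S}) → (ℕ × {u : V // u ∉ S}) → Cell V}
    {β : ℕ × {u : V // u ∉ S}} {j j' : ℕ} (h : IsCritBound Af β j) (h' : IsCritBound Af β j') :
    j = j' := by
  by_contra hne
  rcases Nat.lt_or_gt_of_ne hne with hlt | hlt
  · exact h.2.1 (h'.2.2 j h.1 hlt)
  · exact h'.2.1 (h.2.2 j' h'.1 hlt)

end Cells

theorem drop_le_critical_interval_general {V : Type*} [Fintype V] (G : SimpleGraph V)
    (ov : LinearOrder V) (oe : LinearOrder (Sym2 V)) (S : Set V) (s : ℕ)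
    (Af : (ℕ × {u : V // u ∉ S}) → (ℕ × {u : V // u ∉ S}) → Cell V)
    -- property (1)
    (h1 : ∀ β δ, zLT ov δ β → Af β δ =
      ofOpt (heightTable (delVerts G S) ov oe (δ.1, δ.2.val)))
    -- property (2)
    (h2 : ∀ β δ, zLE ov β δ → Af β δ ≠ Cell.hole →
      Af β δ = ofOpt (heightTable G ov oe (δ.1, δ.2.val)))
    -- property (3)
    (h3 : ∀ β γ, IsSuccZ ov β γ → ∃ j, IsCritBound Af β j ∧
      ∃ δ, zLE ov β δ ∧ zLE ov δ (j, β.2) ∧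
        (Af γ β = Af β δ ∧ Af γ δ = Af β β ∧
          ∀ ε, ε ≠ β → ε ≠ δ → Af γ ε = Af β ε) ∧
        (δ.2 ≠ β.2 → Af β δ = Cell.edge s(β.2.val, δ.2.val)))
    (e : Sym2 V)
    (β : ℕ × {u : V // u ∉ S})
    (hβ : heightTable (delVerts G S) ov oe (β.1, β.2.val) = some e)
    (j : ℕ) (hj : IsCritBound Af β j) :
    dropHeight G ov oe S e ≤ (j : ℤ) - (β.1 : ℤ) := by
  obtain ⟨γ, hγ⟩ := exists_isSuccZ ov β
  obtain ⟨j', hj', δ, hβδ, hδj, ⟨hswap, -, -⟩, -⟩ := h3 β γ hγ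
  rw [hj'.unique hj] at hδj
  have hδe : Af β δ = Cell.edge e := by rw [← hswap, h1 γ β hγ.1, hβ, ofOpt]
  have hGδ : heightTable G ov oe (δ.1, δ.2.val) = some e :=
    ofOpt_eq_edge_iff.mp ((h2 β δ hβδ (by simp [hδe])).symm.trans hδe)
  have hδ_row : δ.1 ≤ j := hδj.fst_le
  rw [dropHeight, edgeHeight_eq_of_heightTable_eq_some hGδ,
    edgeHeight_eq_of_heightTable_eq_some hβ]
  omega

/-- Lemma `drop` of the paper.  Suppose `{A_β : β ∈ Z}` is a family
of arrays as in Lemma `stdtbl` (satisfying properties (1)–(3)), `e` is an edge of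
`G′ = G − S`, `β` is the cell of the height table `A′` of `G′` containing `e`, and
`[(i,u),(j,u)]` is the critical interval of `A_β`.  Then `drop(G,S,e) ≤ j − i`. -/
theorem drop_le_critical_interval {V : Type*} [Fintype V] (G : SimpleGraph V)
    (ov : LinearOrder V) (oe : LinearOrder (Sym2 V)) (n : ℕ)
    (hn : Fintype.card V = n) (S : Set V) (s : ℕ) (hS : S.ncard = s)
    (hsn : s + 2 ≤ n)
    (Af : (ℕ × {u : V // u ∉ S}) → (ℕ × {u : V // u ∉ S}) → Cell V)
    -- every cell is empty, a hole, or contains an edge of G′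
    (hedges : ∀ β δ e, Af β δ = Cell.edge e → e ∈ (delVerts G S).edgeSet)
    -- each edge of G′ appears in exactly one cell of each array
    (huniq : ∀ β, ∀ e ∈ (delVerts G S).edgeSet, ∃! δ, Af β δ = Cell.edge e)
    -- property (1)
    (h1 : ∀ β δ, zLT ov δ β → Af β δ =
      ofOpt (heightTable (delVerts G S) ov oe (δ.1, δ.2.val)))
    -- property (2)
    (h2 : ∀ β δ, zLE ov β δ → Af β δ ≠ Cell.hole →
      Af β δ = ofOpt (heightTable G ov oe (δ.1, δ.2.val)))
    -- property (3)
    (h3 : ∀ β γ, IsSuccZ ov β γ → ∃ j, IsCritBound Af β j ∧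
      ∃ δ, zLE ov β δ ∧ zLE ov δ (j, β.2) ∧
        (Af γ β = Af β δ ∧ Af γ δ = Af β β ∧
          ∀ ε, ε ≠ β → ε ≠ δ → Af γ ε = Af β ε) ∧
        (δ.2 ≠ β.2 → Af β δ = Cell.edge s(β.2.val, δ.2.val)))
    (e : Sym2 V) (he : e ∈ (delVerts G S).edgeSet)
    (β : ℕ × {u : V // u ∉ S})
    (hβ : heightTable (delVerts G S) ov oe (β.1, β.2.val) = some e)
    (j : ℕ) (hj : IsCritBound Af β j) :
    dropHeight G ov oe S e ≤ (j : ℤ) - (β.1 : ℤ) :=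
  drop_le_critical_interval_general G ov oe S s Af h1 h2 h3 e β hβ j hj

end AltitudePaper
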